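/- arXiv:0903.1586 — 2 statements merged into one kernel-verified Lean document; each statement's English description precedes it below -/
import Mathlib

section
/- Let H ∈ 𝓗 and let M be a kG-module of dimension r. Then H is M-excellent if and only if H is (M,χ)-acceptable for every linear character χ : G → k^× of G. -/
open Module LinearMap

/-- An element of `GL(V)` is a *reflection* if it has finite order and its fixed
subspace `ker (g - 1)` is a hyperplane of `V`. -/
def IsReflection {k : Type*} [Field k] {V : Type*} [AddCommGroup V] [Module k V]
    (g : (V →ₗ[k] V)ˣ) : Prop :=
  IsOfFinOrder g ∧
    Module.finrank k (LinearMap.ker ((g : V →ₗ[k] V) - LinearMap.id)) + 1 = Module.finrank k V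

/-- The set of reflecting hyperplanes of a subgroup `G` of `GL(V)`. -/
def reflHyperplanes {k : Type*} [Field k] {V : Type*} [AddCommGroup V] [Module k V]
    (G : Subgroup (V →ₗ[k] V)ˣ) : Set (Submodule k V) :=
  {H | ∃ s ∈ G, IsReflection s ∧ H = LinearMap.ker ((s : V →ₗ[k] V) - LinearMap.id)}

/-- `(G, V)` is a reflection group: `G` is generated by its reflections. -/
def IsReflectionGroup {k : Type*} [Field k] {V : Type*} [AddCommGroup V] [Module k V]
    (G : Subgroup (V →ₗ[k] V)ˣ) : Prop :=
  G = Subgroup.closure {g | g ∈ G ∧ IsReflection g}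

/-- `n_{j,H}(N)` : the multiplicity of `ζ^j` as an eigenvalue of `s = s_H` acting on the
dual module `N*` (via the dual representation). -/
noncomputable def nJ {k : Type*} [Field k] {G : Type*} [Group G] {N : Type*} [AddCommGroup N]
    [Module k N] (ρ : Representation k G N) (s : G) (ζ : k) (j : ℕ) : ℕ :=
  Module.finrank k (Module.End.eigenspace (ρ.dual s) (ζ ^ j))

/-- `n_H(N) = ∑_{j=0}^{e_H - 1} j · n_{j,H}(N)`. -/
noncomputable def nH {k : Type*} [Field k] {G : Type*} [Group G] {N : Type*} [AddCommGroup N]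
    [Module k N] (ρ : Representation k G N) (s : G) (ζ : k) (e : ℕ) : ℕ :=
  ∑ j ∈ Finset.range e, j * nJ ρ s ζ j

/-- A linear endomorphism acts as the identity or as a reflection. -/
def ActsAsIdOrReflection {k : Type*} [Field k] {N : Type*} [AddCommGroup N] [Module k N]
    (f : N →ₗ[k] N) : Prop :=
  f = LinearMap.id ∨
    (IsOfFinOrder f ∧
      Module.finrank k (LinearMap.ker (f - LinearMap.id)) + 1 = Module.finrank k N)

/-- `H` is `(M,χ)`-acceptable: writing the restriction of `M` to `G_H` as
`det^{-j_1} ⊕ ⋯ ⊕ det^{-j_r}` with `0 ≤ j_i ≤ e_H - 1` (equivalently, there is a basis of `M*`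
on which `s_H` acts with eigenvalues `ζ_H^{j_i}`), for all disjoint subsets `I₁, I₂` of
`{1, …, r}` one has `∑_{i ∈ I₁} j_i < e_H - n_H(χ)` or `∑_{i ∈ I₂} j_i < e_H - n_H(χ)`. -/
def IsAcceptable {k : Type*} [Field k] {G : Type*} [Group G] {M : Type*} [AddCommGroup M]
    [Module k M] (ρ : Representation k G M) (s : G) (ζ : k) (e r nχ : ℕ) : Prop :=
  ∀ j : Fin r → ℕ, (∀ i, j i < e) →
    (∃ y : Basis (Fin r) k (Module.Dual k M),
      ∀ i, ρ.dual s (y i) = ζ ^ (j i) • y i) →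
    ∀ I₁ I₂ : Finset (Fin r), Disjoint I₁ I₂ →
      ((∑ i ∈ I₁, j i) < e - nχ ∨ (∑ i ∈ I₂, j i) < e - nχ)

/-!
On a basis of `M*` diagonalising `s`, with eigenvalues `ζ ^ j i` and `0 ≤ j i < e`, the number
of nonzero exponents `j i` is the rank of `ρ s - 1` (the dual representation has the same
fixed-space dimension). So `s` acts as the identity or as a reflection exactly when at most one
`j i` is nonzero. Then one of any two disjoint index sets carries only zero exponents, which gives
acceptability for every character. Otherwise let `m > 0` be the smaller of two nonzero exponents:
for the character `det ^ (m - e)` acceptability asks that one of them be `< m`, which fails.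
-/

open Finset Polynomial

section FixedSpace

variable {K M : Type*} [Field K] [AddCommGroup M] [Module K M]

theorem actsAsIdOrReflection_iff_finrank_range_sub_id_le_one [FiniteDimensional K M]
    {f : M →ₗ[K] M} (hf : IsOfFinOrder f) :
    ActsAsIdOrReflection f ↔ finrank K (range (f - LinearMap.id)) ≤ 1 := by
  have hrank := finrank_range_add_finrank_ker (f - LinearMap.id)
  have hid : f = LinearMap.id ↔ finrank K (range (f - LinearMap.id)) = 0 := by
    rw [Submodule.finrank_eq_zero, range_eq_bot, sub_eq_zero]
  rw [ActsAsIdOrReflection, hid]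
  simp only [hf, true_and]
  omega

theorem finrank_range_sub_id_eq_card_of_apply_eq_smul [DecidableEq K] {ι : Type*} [Fintype ι]
    [DecidableEq ι] (f : M →ₗ[K] M) (v : Basis ι K M) (μ : ι → K) (hv : ∀ i, f (v i) = μ i • v i) :
    finrank K (range (f - LinearMap.id)) = #{i | μ i ≠ 1} := by
  have hdiag : f - LinearMap.id = Matrix.toLin v v (Matrix.diagonal fun i => μ i - 1) :=
    v.ext fun i => by simp [Matrix.toLin_self, Matrix.diagonal_apply, hv, sub_smul]
  rw [hdiag, ← Matrix.rank_eq_finrank_range_toLin, Matrix.rank_diagonal, Fintype.card_subtype]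
  simp only [ne_eq, sub_eq_zero]

theorem finrank_range_dualMap_sub_id (f : M →ₗ[K] M) :
    finrank K (range (f.dualMap - LinearMap.id)) = finrank K (range (f - LinearMap.id)) := by
  have hsub : f.dualMap - LinearMap.id = (f - LinearMap.id).dualMap := by
    ext; simp
  rw [hsub, finrank_range_dualMap_eq_finrank_range]

end FixedSpace

theorem Representation.finrank_range_inv_sub_id {k G M : Type*} [Field k] [Group G]
    [AddCommGroup M] [Module k M] (ρ : Representation k G M) (g : G) :
    finrank k (range (ρ g⁻¹ - LinearMap.id)) = finrank k (range (ρ g - LinearMap.id)) := by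
  have hcomp : ρ g⁻¹ - LinearMap.id = ρ g⁻¹ ∘ₗ (-(ρ g - LinearMap.id)) := by
    ext x; simp
  rw [hcomp, range_comp, range_neg]
  have hinj : Function.Injective (ρ g⁻¹) := Function.LeftInverse.injective (ρ.self_inv_apply g)
  exact (Submodule.equivMapOfInjective _ hinj _).finrank_eq.symm

theorem Representation.finrank_range_dual_sub_id {k G M : Type*} [Field k] [Group G]
    [AddCommGroup M] [Module k M] [FiniteDimensional k M] (ρ : Representation k G M) (g : G) :
    finrank k (range (ρ.dual g - LinearMap.id)) = finrank k (range (ρ g - LinearMap.id)) := by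
  rw [Representation.dual_apply, ← finrank_range_inv_sub_id ρ g]
  exact finrank_range_dualMap_sub_id _

theorem Module.End.IsSemisimple.exists_basis_apply_eq_smul {K M : Type*} [Field K]
    [IsAlgClosed K] [AddCommGroup M] [Module K M] [FiniteDimensional K M] {f : Module.End K M}
    (hf : f.IsSemisimple) :
    ∃ (v : Basis (Fin (finrank K M)) K M) (μ : Fin (finrank K M) → K),
      ∀ i, f (v i) = μ i • v i := by
  classical
  have hdecomp := DirectSum.isInternal_submodule_of_iSupIndep_of_iSup_eq_top
    f.eigenspaces_iSupIndep hf.iSup_eigenspace_eq_top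
  let v := hdecomp.collectedBasis fun μ ↦ finBasis K (f.eigenspace μ)
  have : Fintype ((μ : K) × Fin (finrank K (f.eigenspace μ))) :=
    FiniteDimensional.fintypeBasisIndex v
  let σ := v.indexEquiv (finBasis K M)
  refine ⟨v.reindex σ, fun i ↦ (σ.symm i).1, fun i ↦ ?_⟩
  rw [Basis.reindex_apply]
  exact Module.End.mem_eigenspace_iff.mp (hdecomp.collectedBasis_mem _ _)

theorem Module.End.exists_basis_apply_eq_pow_smul_of_pow_eq_one {K M : Type*} [Field K]
    [IsAlgClosed K] [AddCommGroup M] [Module K M] [FiniteDimensional K M] {f : Module.End K M}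
    {e : ℕ} (he : e ≠ 0) (hf : f ^ e = 1) {ζ : K} (hζ : IsPrimitiveRoot ζ e) {n : ℕ}
    (hn : finrank K M = n) :
    ∃ (v : Basis (Fin n) K M) (j : Fin n → ℕ), (∀ i, j i < e) ∧ ∀ i, f (v i) = ζ ^ j i • v i := by
  subst hn
  have : NeZero e := ⟨he⟩
  have : NeZero (e : K) := hζ.neZero'
  have hss : f.IsSemisimple := isSemisimple_of_squarefree_aeval_eq_zero
    (X_pow_sub_one_separable_iff.mpr (NeZero.ne (e : K))).squarefree (by simp [hf])
  obtain ⟨v, μ, hv⟩ := hss.exists_basis_apply_eq_smul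
  have hroot (i) : μ i ^ e = 1 := by
    have hvi : f.HasEigenvector (μ i) (v i) :=
      ⟨Module.End.mem_eigenspace_iff.mpr (hv i), v.ne_zero i⟩
    have := hvi.pow_apply e
    rw [hf, Module.End.one_apply] at this
    exact (smul_left_injective K (v.ne_zero i) (by simp only [← this, one_smul])).symm
  choose j hj hζj using fun i ↦ hζ.eq_pow_of_pow_eq_one (hroot i)
  exact ⟨v, j, hj, fun i ↦ by rw [hv, hζj]⟩

theorem Representation.card_filter_ne_zero_eq_finrank_range_sub_id {k G M : Type*} [Field k]
    [Group G] [AddCommGroup M] [Module k M] [FiniteDimensional k M] (ρ : Representation k G M)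
    {g : G} {ζ : k} {e : ℕ} (hζ : IsPrimitiveRoot ζ e) {ι : Type*} [Fintype ι] {j : ι → ℕ}
    (hj : ∀ i, j i < e) {y : Basis ι k (Dual k M)} (hy : ∀ i, ρ.dual g (y i) = ζ ^ j i • y i) :
    #{i | j i ≠ 0} = finrank k (range (ρ g - LinearMap.id)) := by
  classical
  rw [← ρ.finrank_range_dual_sub_id, finrank_range_sub_id_eq_card_of_apply_eq_smul _ y _ hy]
  refine congrArg card (filter_congr fun i _ ↦ ?_)
  rw [ne_eq, ne_eq, hζ.pow_eq_one_iff_dvd]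
  exact ⟨fun h hdvd ↦ h (Nat.eq_zero_of_dvd_of_lt hdvd (hj i)), fun h h0 ↦ h (h0 ▸ dvd_zero e)⟩

theorem Finset.sum_lt_or_sum_lt_of_card_filter_ne_zero_le_one {ι : Type*} [Fintype ι]
    {j : ι → ℕ} (hj : #{i | j i ≠ 0} ≤ 1) {b : ℕ} (hb : 0 < b) {I₁ I₂ : Finset ι}
    (hI : Disjoint I₁ I₂) : ∑ i ∈ I₁, j i < b ∨ ∑ i ∈ I₂, j i < b := by
  by_contra! h
  obtain ⟨i₁, hi₁, h₁⟩ := exists_ne_zero_of_sum_ne_zero (by omega : ∑ i ∈ I₁, j i ≠ 0)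
  obtain ⟨i₂, hi₂, h₂⟩ := exists_ne_zero_of_sum_ne_zero (by omega : ∑ i ∈ I₂, j i ≠ 0)
  have h₁₂ : i₁ = i₂ := card_le_one.mp hj i₁ (by simpa using h₁) i₂ (by simpa using h₂)
  exact disjoint_left.mp hI hi₁ (h₁₂ ▸ hi₂)

theorem statement1_general
    {k : Type*} [Field k] [IsAlgClosed k]
    {V : Type*} [AddCommGroup V] [Module k V]
    (G : Subgroup (V →ₗ[k] V)ˣ) (hGfin : Finite G)
    {M : Type*} [AddCommGroup M] [Module k M] [FiniteDimensional k M]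
    (ρ : Representation k G M) (r : ℕ) (hr : Module.finrank k M = r)
    (e : ℕ) (s : G) (ζ : k)
    (he : orderOf s = e)
    (hdet : LinearMap.det ((s : (V →ₗ[k] V)ˣ) : V →ₗ[k] V) = ζ)
    (hζ : IsPrimitiveRoot ζ e) :
    ActsAsIdOrReflection (ρ s) ↔
      ∀ (χ : G →* kˣ) (nχ : ℕ), nχ < e → ((χ s : k) = (ζ ^ nχ)⁻¹) →
        IsAcceptable ρ s ζ e r nχ := by
  have he0 : 0 < e := he ▸ orderOf_pos s
  rw [actsAsIdOrReflection_iff_finrank_range_sub_id_le_one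
    (ρ.isOfFinOrder (isOfFinOrder_of_finite s))]
  constructor
  · intro hρ χ nχ hnχ _ j hj ⟨y, hy⟩ I₁ I₂ hI
    rw [← ρ.card_filter_ne_zero_eq_finrank_range_sub_id hζ hj hy] at hρ
    exact sum_lt_or_sum_lt_of_card_filter_ne_zero_le_one hρ (by omega) hI
  · intro hacc
    by_contra! hρ
    have hse : ρ.dual s ^ e = 1 := by rw [← map_pow, ← he, pow_orderOf_eq_one, map_one]
    obtain ⟨y, j, hj, hy⟩ := Module.End.exists_basis_apply_eq_pow_smul_of_pow_eq_one he0.ne' hse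
      hζ (Subspace.dual_finrank_eq.trans hr)
    rw [← ρ.card_filter_ne_zero_eq_finrank_range_sub_id hζ hj hy] at hρ
    obtain ⟨i₁, hi₁, i₂, hi₂, hne⟩ := one_lt_card.mp hρ
    simp only [mem_filter, mem_univ, true_and] at hi₁ hi₂
    set m := min (j i₁) (j i₂) with hm
    -- for this `χ` the acceptability bound `e - nχ` is `m`, which neither singleton stays below
    let det : G →* kˣ := (Units.map (LinearMap.det : (V →ₗ[k] V) →* k)).comp G.subtype
    let χ : G →* kˣ := det⁻¹ ^ (e - m)
    have hχ : (χ s : k) = (ζ ^ (e - m))⁻¹ := by simp [χ, det, hdet]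
    have := hacc χ (e - m) (by omega) hχ j hj ⟨y, hy⟩ {i₁} {i₂} (by simpa)
    simp only [sum_singleton] at this
    omega

/-- `H` is `M`-excellent iff `H` is `(M,χ)`-acceptable for every linear
character `χ : G → k^×` of `G`. -/
theorem statement1
    {k : Type*} [Field k] [CharZero k] [IsAlgClosed k]
    {V : Type*} [AddCommGroup V] [Module k V] [FiniteDimensional k V]
    (G : Subgroup (V →ₗ[k] V)ˣ) (hGfin : Finite G) (hG : IsReflectionGroup G)
    {M : Type*} [AddCommGroup M] [Module k M] [FiniteDimensional k M]
    (ρ : Representation k G M) (r : ℕ) (hr : Module.finrank k M = r)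
    (H : Submodule k V) (hH : H ∈ reflHyperplanes G)
    (e : ℕ) (s : G) (ζ : k)
    (hfix : ∀ v ∈ H, ((s : (V →ₗ[k] V)ˣ) : V →ₗ[k] V) v = v)
    (hgen : ∀ g : G, (∀ v ∈ H, ((g : (V →ₗ[k] V)ˣ) : V →ₗ[k] V) v = v) →
      g ∈ Subgroup.zpowers s)
    (he : orderOf s = e)
    (hdet : LinearMap.det ((s : (V →ₗ[k] V)ˣ) : V →ₗ[k] V) = ζ)
    (hζ : IsPrimitiveRoot ζ e) :
    ActsAsIdOrReflection (ρ s) ↔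
      ∀ (χ : G →* kˣ) (nχ : ℕ), nχ < e → ((χ s : k) = (ζ ^ nχ)⁻¹) →
        IsAcceptable ρ s ζ e r nχ :=
  statement1_general G hGfin ρ r hr e s ζ he hdet hζ
end

section
/- Let M be a kG-module of dimension r, χ a linear character of G, and assume every hyperplane in 𝒢 is M-good. Set 𝒢_0 = {H ∈ 𝒢 : n_H(M) = 0}, 𝒢_+ = {H ∈ 𝒢 : n_H(M) ≥ e_H − n_H(χ)}, 𝒢_− = 𝒢 ∖ 𝒢_+ and 𝒢_{≠0} = 𝒢 ∖ 𝒢_0. Then (i) Q_{M*} = Π_{H∈ℬ} α_H^{n_H(M*)} · Π_{H∈𝒢_{≠0}} α_H^{e_H(r−n_{0,H}(M)) − n_H(M)}, and (ii) Q_{χ·det_M} = Π_{H∈ℬ} α_H^{n_H(χ·det_M)} · Π_{H∈𝒢_−} α_H^{n_H(χ)+n_H(M)} · Π_{H∈𝒢_+} α_H^{n_H(χ)+n_H(M)−e_H}. -/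
open Module LinearMap

/-- The algebra `S(V*)` of polynomial functions on `V` : the subalgebra of functions
`V → k` generated by the linear forms.  (Over an infinite field this is the symmetric
algebra of `V*`.) -/
def polyFuns (k : Type*) [Field k] (V : Type*) [AddCommGroup V] [Module k V] :
    Subalgebra k (V → k) :=
  Algebra.adjoin k (Set.range fun f : Module.Dual k V => ⇑f)

/-- A linear form, seen as an element of `S(V*)`. -/
def ofLin {k : Type*} [Field k] {V : Type*} [AddCommGroup V] [Module k V]
    (f : Module.Dual k V) : polyFuns k V :=
  ⟨⇑f, Algebra.subset_adjoin (Set.mem_range_self f)⟩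

/-!
Everything is local at a hyperplane `H`. Since `s_H ^ e_H = 1` and `ζ_H` is a primitive
`e_H`-th root of unity, `M` splits into eigenspaces of `s_H` for the eigenvalues `ζ_H ^ j`, and the
eigenvalue `ζ_H ^ j` on `M*` has the multiplicity of `ζ_H ^ (e_H - j)` on `M`. Hence
`n_H(M) + n_H(M*) = e_H (r - n_{0,H}(M))`, and `n_H(M) = 0` forces `n_H(M*) = 0`: this is (i).
Moreover `det_M(s_H) = ζ_H ^ n_H(M*)`, so `n_H(χ·det_M) ≡ n_H(χ) + n_H(M) [MOD e_H]`; for an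
`M`-good `H` the right side lies in `[0, 2 e_H)`, which gives (ii).
-/

namespace Module.End

variable {k M : Type*} [Field k] [AddCommGroup M] [Module k M]

lemma eigenspace_le_eigenspace_inv {A B : End k M} (hAB : A * B = 1) {μ : k} (hμ : μ ≠ 0) :
    eigenspace B μ ≤ eigenspace A μ⁻¹ := by
  intro x hx
  rw [mem_eigenspace_iff] at hx ⊢
  calc A x = μ⁻¹ • A (μ • x) := by rw [map_smul, inv_smul_smul₀ hμ]
    _ = μ⁻¹ • x := by rw [← hx, ← mul_apply, hAB, one_apply]

lemma eigenspace_eq_eigenspace_inv {A B : End k M} (hAB : A * B = 1) (hBA : B * A = 1)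
    {μ : k} (hμ : μ ≠ 0) : eigenspace B μ = eigenspace A μ⁻¹ :=
  le_antisymm (eigenspace_le_eigenspace_inv hAB hμ)
    (by simpa using eigenspace_le_eigenspace_inv hBA (inv_ne_zero hμ))

variable [FiniteDimensional k M]

lemma finrank_eigenspace_transpose (f : End k M) (μ : k) :
    finrank k (eigenspace (Dual.transpose (R := k) f) μ) = finrank k (eigenspace f μ) := by
  have hdual :
      (Dual.transpose (R := k) f : End k (Dual k M)) - μ • 1 = (f - μ • 1).dualMap := by
    ext φ x
    simp [Dual.transpose_apply, dualMap_apply]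
  have h₁ := finrank_range_add_finrank_ker (f - μ • 1)
  have h₂ := finrank_range_add_finrank_ker (f - μ • 1).dualMap
  have h₃ := finrank_range_dualMap_eq_finrank_range (f - μ • 1)
  have h₄ : finrank k (Dual k M) = finrank k M := Subspace.dual_finrank_eq
  rw [eigenspace_def, eigenspace_def, hdual]
  omega

lemma finrank_eq_sum_finrank_eigenspace {ι : Type*} [Fintype ι] [DecidableEq ι] {A : End k M}
    {μ : ι → k} (h : DirectSum.IsInternal fun i => eigenspace A (μ i)) :
    finrank k M = ∑ i, finrank k (eigenspace A (μ i)) := by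
  rw [finrank_eq_card_basis (h.collectedBasis fun i => finBasis k _), Fintype.card_sigma]
  simp only [Fintype.card_fin]

lemma det_eq_prod_pow_finrank_eigenspace {ι : Type*} [Fintype ι] [DecidableEq ι] {A : End k M}
    {μ : ι → k} (h : DirectSum.IsInternal fun i => eigenspace A (μ i)) :
    LinearMap.det A = ∏ i, μ i ^ finrank k (eigenspace A (μ i)) := by
  set b := h.collectedBasis fun i => finBasis k (eigenspace A (μ i))
  have hdiag : toMatrix b b A = Matrix.diagonal fun x => μ x.1 := by
    ext x y
    rw [toMatrix_apply, mem_eigenspace_iff.mp (h.collectedBasis_mem _ y), map_smul,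
      Basis.repr_self]
    rcases eq_or_ne x y with rfl | hxy
    · simp
    · simp [Matrix.diagonal_apply_ne _ hxy, Ne.symm hxy]
  rw [← LinearMap.det_toMatrix b, hdiag, Matrix.det_diagonal, ← Finset.univ_sigma_univ,
    Finset.prod_sigma]
  simp only [Finset.prod_const, Finset.card_univ, Fintype.card_fin]

lemma isInternal_eigenspace_pow_of_pow_eq_one [IsAlgClosed k] {A : End k M} {e : ℕ} [NeZero e]
    {ζ : k} (hζ : IsPrimitiveRoot ζ e) (hA : A ^ e = 1) :
    DirectSum.IsInternal fun j : Fin e => eigenspace A (ζ ^ (j : ℕ)) := by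
  have hann : Polynomial.aeval A (Polynomial.X ^ e - 1 : Polynomial k) = 0 := by simp [hA]
  have hsep : (Polynomial.X ^ e - 1 : Polynomial k).Separable :=
    Polynomial.X_pow_sub_one_separable_iff.mpr (hζ.neZero').out
  have hss : A.IsFinitelySemisimple :=
    (isSemisimple_of_squarefree_aeval_eq_zero hsep.squarefree hann).isFinitelySemisimple
  have hroot : ∀ μ : k, eigenspace A μ ≠ ⊥ → ∃ j < e, ζ ^ j = μ := fun μ hμ =>
    hζ.eq_pow_of_pow_eq_one <| by
      simpa [sub_eq_zero] using (hasEigenvalue_iff_isRoot.mp hμ).dvd (minpoly.dvd k A hann)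
  rw [DirectSum.isInternal_submodule_iff_iSupIndep_and_iSup_eq_top]
  refine ⟨A.eigenspaces_iSupIndep.comp fun i j hij => Fin.ext (hζ.pow_inj i.isLt j.isLt hij),
    top_le_iff.mp ?_⟩
  rw [← iSup_maxGenEigenspace_eq_top A]
  refine iSup_le fun μ => ?_
  rw [hss.maxGenEigenspace_eq_eigenspace]
  by_cases hμ : eigenspace A μ = ⊥
  · simp [hμ]
  · obtain ⟨j, hj, rfl⟩ := hroot μ hμ
    exact le_iSup (fun j : Fin e => eigenspace A (ζ ^ (j : ℕ))) ⟨j, hj⟩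

end Module.End

lemma Finset.sum_range_mul_reflect_add (m : ℕ → ℕ) (e : ℕ) :
    ∑ j ∈ Finset.range e, j * m (e - j) + e * m 0 =
      ∑ j ∈ Finset.range e, (e - j) * m j := by
  have h := Finset.sum_range_reflect (fun j => (e - j) * m j) (e + 1)
  simp only [Nat.add_sub_cancel, Finset.sum_range_succ, Nat.sub_self, Nat.sub_zero, zero_mul,
    add_zero] at h
  rw [← h]
  congr 1
  refine Finset.sum_congr rfl fun j hj => ?_
  rw [Nat.sub_sub_self (Finset.mem_range.mp hj).le]

lemma Finset.sum_range_mul_eq_zero_of_reflect {m : ℕ → ℕ} {e : ℕ}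
    (h : ∑ j ∈ Finset.range e, j * m (e - j) = 0) : ∑ j ∈ Finset.range e, j * m j = 0 := by
  rw [Finset.sum_eq_zero_iff] at h ⊢
  intro j hj
  have hje := Finset.mem_range.mp hj
  rcases Nat.eq_zero_or_pos j with rfl | hj₀
  · exact zero_mul _
  · have := h (e - j) (Finset.mem_range.mpr (by omega))
    rw [Nat.sub_sub_self hje.le, Nat.mul_eq_zero] at this
    rcases this with h₀ | h₀
    · omega
    · rw [h₀, mul_zero]

namespace Representation

open Module.End

variable {k G M : Type*} [Field k] [Group G] [AddCommGroup M] [Module k M] [FiniteDimensional k M]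
  (ρ : Representation k G M) (s : G) {ζ : k} {e : ℕ}

lemma nJ_dual (j : ℕ) : nJ ρ.dual s ζ j = finrank k (eigenspace (ρ s) (ζ ^ j)) := by
  rw [nJ, dual_apply, finrank_eigenspace_transpose, dual_apply, inv_inv,
    finrank_eigenspace_transpose]

lemma nJ_eq_nJ_dual_sub (hζ : IsPrimitiveRoot ζ e) [NeZero e] {j : ℕ} (hj : j ≤ e) :
    nJ ρ s ζ j = nJ ρ.dual s ζ (e - j) := by
  have hinv : (ζ ^ j)⁻¹ = ζ ^ (e - j) :=
    inv_eq_of_mul_eq_one_right (by rw [← pow_add, Nat.add_sub_cancel' hj, hζ.pow_eq_one])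
  rw [nJ_dual, nJ, dual_apply, finrank_eigenspace_transpose,
    eigenspace_eq_eigenspace_inv
      (by rw [← map_mul, mul_inv_cancel, map_one]) (by rw [← map_mul, inv_mul_cancel, map_one])
      (pow_ne_zero j (hζ.ne_zero (NeZero.ne e))), hinv]

lemma nH_eq_sum_nJ_dual (hζ : IsPrimitiveRoot ζ e) [NeZero e] :
    nH ρ s ζ e = ∑ j ∈ Finset.range e, j * nJ ρ.dual s ζ (e - j) :=
  Finset.sum_congr rfl fun j hj => by
    rw [nJ_eq_nJ_dual_sub ρ s hζ (Finset.mem_range.mp hj).le]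

lemma nH_dual_eq_zero_of_nH_eq_zero (hζ : IsPrimitiveRoot ζ e) [NeZero e]
    (h : nH ρ s ζ e = 0) : nH ρ.dual s ζ e = 0 :=
  Finset.sum_range_mul_eq_zero_of_reflect (nH_eq_sum_nJ_dual ρ s hζ ▸ h)

variable [IsAlgClosed k] {s}

lemma sum_nJ_dual_eq_finrank (hζ : IsPrimitiveRoot ζ e) [NeZero e] (hs : s ^ e = 1) :
    ∑ j ∈ Finset.range e, nJ ρ.dual s ζ j = finrank k M := by
  have hA : ρ s ^ e = 1 := by rw [← map_pow, hs, map_one]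
  simp only [nJ_dual,
    ← Fin.sum_univ_eq_sum_range fun j => finrank k (eigenspace (ρ s) (ζ ^ j))]
  exact (finrank_eq_sum_finrank_eigenspace (isInternal_eigenspace_pow_of_pow_eq_one hζ hA)).symm

lemma det_eq_pow_nH_dual (hζ : IsPrimitiveRoot ζ e) [NeZero e] (hs : s ^ e = 1) :
    LinearMap.det (ρ s) = ζ ^ nH ρ.dual s ζ e := by
  have hA : ρ s ^ e = 1 := by rw [← map_pow, hs, map_one]
  rw [det_eq_prod_pow_finrank_eigenspace (isInternal_eigenspace_pow_of_pow_eq_one hζ hA), nH,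
    ← Finset.prod_pow_eq_pow_sum, ← Fin.prod_univ_eq_prod_range]
  simp only [nJ_dual, pow_mul]

lemma nH_add_nH_dual (hζ : IsPrimitiveRoot ζ e) [NeZero e] (hs : s ^ e = 1) :
    nH ρ s ζ e + nH ρ.dual s ζ e = e * (finrank k M - nJ ρ s ζ 0) := by
  have h₀ : nJ ρ s ζ 0 = nJ ρ.dual s ζ 0 := by
    rw [nJ_eq_nJ_dual_sub ρ s hζ (Nat.zero_le e), Nat.sub_zero, nJ_dual, nJ_dual,
      hζ.pow_eq_one, pow_zero]
  have hsplit : ∑ j ∈ Finset.range e, ((e - j) * nJ ρ.dual s ζ j + j * nJ ρ.dual s ζ j) =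
      e * finrank k M := by
    rw [← sum_nJ_dual_eq_finrank ρ hζ hs, Finset.mul_sum]
    refine Finset.sum_congr rfl fun j hj => ?_
    rw [← add_mul, Nat.sub_add_cancel (Finset.mem_range.mp hj).le]
  have hreflect := Finset.sum_range_mul_reflect_add (nJ ρ.dual s ζ) e
  rw [Finset.sum_add_distrib, ← hreflect, ← nH_eq_sum_nJ_dual ρ s hζ] at hsplit
  have hdual : nH ρ.dual s ζ e = ∑ j ∈ Finset.range e, j * nJ ρ.dual s ζ j := rfl
  rw [h₀, Nat.mul_sub, ← hsplit]
  omega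

end Representation

lemma Nat.eq_ite_of_modEq_add {a n d e : ℕ} (ha : a < e) (hn : n < e) (hd : d < e)
    (h : d ≡ a + n [MOD e]) : d = if e - a ≤ n then a + n - e else a + n := by
  rw [Nat.ModEq, Nat.mod_eq_of_lt hd] at h
  split_ifs with hle
  · rw [h, Nat.mod_eq_sub_mod (by omega), Nat.mod_eq_of_lt (by omega)]
  · rw [h, Nat.mod_eq_of_lt (by omega)]

lemma IsPrimitiveRoot.modEq_add_of_mul_pow_eq_inv {k : Type*} [Field k] {c ζ : k}
    {a d m n e : ℕ} [NeZero e] (hζ : IsPrimitiveRoot ζ e) (hc : c = (ζ ^ a)⁻¹)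
    (hcm : c * ζ ^ m = (ζ ^ d)⁻¹) (hnm : e ∣ n + m) : d ≡ a + n [MOD e] := by
  have hζ₀ : ζ ≠ 0 := hζ.ne_zero (NeZero.ne e)
  have hpow : ζ ^ d = ζ ^ (a + n) := by
    have hm : ζ ^ m * ζ ^ d = ζ ^ a := by
      rw [hc] at hcm
      field_simp at hcm
      linear_combination hcm
    calc ζ ^ d = ζ ^ d * ζ ^ (n + m) := by rw [(hζ.pow_eq_one_iff_dvd _).mpr hnm, mul_one]
      _ = ζ ^ n * (ζ ^ m * ζ ^ d) := by ring
      _ = ζ ^ (a + n) := by rw [hm, pow_add, mul_comm]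
  rwa [(hζ.isOfFinOrder (NeZero.ne e)).pow_eq_pow_iff_modEq, ← hζ.eq_orderOf] at hpow

theorem statement9_general
    {k : Type*} [Field k] [IsAlgClosed k]
    {V : Type*} [AddCommGroup V] [Module k V]
    [DecidableEq (Submodule k V)]
    (G : Subgroup (V →ₗ[k] V)ˣ)
    {M : Type*} [AddCommGroup M] [Module k M] [FiniteDimensional k M]
    (ρM : Representation k G M) (r : ℕ) (hr : Module.finrank k M = r)
    -- the (finite) set of reflecting hyperplanes and the data attached to each of them
    (HypF : Finset (Submodule k V))
    (α : Submodule k V → Module.Dual k V)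
    (eF : Submodule k V → ℕ) (sF : Submodule k V → G) (ζF : Submodule k V → k)
    (he : ∀ H ∈ HypF, orderOf (sF H) = eF H)
    (hζ : ∀ H ∈ HypF, IsPrimitiveRoot (ζF H) (eF H))
    -- a linear character `χ` and the integers `n_H(χ)`, `n_H(χ·det_M)`
    (χ : G →* kˣ) (nχf : Submodule k V → ℕ)
    (hnχ : ∀ H ∈ HypF, nχf H < eF H ∧ (χ (sF H) : k) = (ζF H ^ nχf H)⁻¹)
    (nχd : Submodule k V → ℕ)
    (hnχd : ∀ H ∈ HypF, nχd H < eF H ∧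
      (χ (sF H) : k) * LinearMap.det (ρM (sF H)) = (ζF H ^ nχd H)⁻¹)
    -- the `G`-stable set `ℬ ⊆ 𝓗` of "bad" hyperplanes; `𝒢 = 𝓗 ∖ ℬ`
    (BF : Finset (Submodule k V)) (hBF : BF ⊆ HypF)
    -- hypothesis : every hyperplane of `𝒢` is `M`-good
    (hgood : ∀ H ∈ HypF \ BF, nH ρM (sF H) (ζF H) (eF H) < eF H) :
    -- (i) `Q_{M*} = ∏_{H ∈ ℬ} α_H^{n_H(M*)} ∏_{H ∈ 𝒢_{≠0}} α_H^{e_H(r - n_{0,H}(M)) - n_H(M)}`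
    (∏ H ∈ HypF, ofLin (α H) ^ nH ρM.dual (sF H) (ζF H) (eF H) =
      (∏ H ∈ BF, ofLin (α H) ^ nH ρM.dual (sF H) (ζF H) (eF H)) *
      ∏ H ∈ (HypF \ BF).filter (fun H => nH ρM (sF H) (ζF H) (eF H) ≠ 0),
        ofLin (α H) ^ (eF H * (r - nJ ρM (sF H) (ζF H) 0) - nH ρM (sF H) (ζF H) (eF H))) ∧
    -- (ii) `Q_{χ·det_M} = ∏_{H ∈ ℬ} α_H^{n_H(χ·det_M)} ∏_{H ∈ 𝒢_-} α_H^{n_H(χ)+n_H(M)}`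
    --      `∏_{H ∈ 𝒢_+} α_H^{n_H(χ)+n_H(M)-e_H}`
    (∏ H ∈ HypF, ofLin (α H) ^ nχd H =
      (∏ H ∈ BF, ofLin (α H) ^ nχd H) *
      (∏ H ∈ (HypF \ BF).filter
          (fun H => ¬ (eF H - nχf H ≤ nH ρM (sF H) (ζF H) (eF H))),
        ofLin (α H) ^ (nχf H + nH ρM (sF H) (ζF H) (eF H))) *
      ∏ H ∈ (HypF \ BF).filter
          (fun H => eF H - nχf H ≤ nH ρM (sF H) (ζF H) (eF H)),
        ofLin (α H) ^ (nχf H + nH ρM (sF H) (ζF H) (eF H) - eF H)) := by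
  have hloc : ∀ H ∈ HypF, NeZero (eF H) ∧ sF H ^ eF H = 1 := fun H hH =>
    ⟨⟨((Nat.zero_le _).trans_lt (hnχ H hH).1).ne'⟩, he H hH ▸ pow_orderOf_eq_one (sF H)⟩
  refine ⟨?_, ?_⟩
  · rw [← Finset.prod_sdiff hBF, mul_comm, Finset.prod_filter]
    congr 1
    refine Finset.prod_congr rfl fun H hH => ?_
    have hH' := (Finset.mem_sdiff.mp hH).1
    obtain ⟨_, hs⟩ := hloc H hH'
    split_ifs with hn
    · have hsum := ρM.nH_add_nH_dual (hζ H hH') hs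
      rw [hr] at hsum
      congr 1
      omega
    · rw [ρM.nH_dual_eq_zero_of_nH_eq_zero _ (hζ H hH') (not_not.mp hn), pow_zero]
  · rw [← Finset.prod_sdiff hBF, mul_assoc, mul_comm (∏ H ∈ BF, _)]
    congr 1
    rw [mul_comm, ← Finset.prod_ite]
    refine Finset.prod_congr rfl fun H hH => ?_
    have hH' := (Finset.mem_sdiff.mp hH).1
    obtain ⟨_, hs⟩ := hloc H hH'
    have hmod : nχd H ≡ nχf H + nH ρM (sF H) (ζF H) (eF H) [MOD eF H] :=
      (hζ H hH').modEq_add_of_mul_pow_eq_inv (hnχ H hH').2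
        (ρM.det_eq_pow_nH_dual (hζ H hH') hs ▸ (hnχd H hH').2)
        (Dvd.intro _ (ρM.nH_add_nH_dual (hζ H hH') hs).symm)
    rw [Nat.eq_ite_of_modEq_add (hnχ H hH').1 (hgood H hH) (hnχd H hH').1 hmod]
    split_ifs <;> rfl

/-- polynomial identities for `Q_{M*}` and `Q_{χ·det_M}`. -/
theorem statement9
    {k : Type*} [Field k] [CharZero k] [IsAlgClosed k]
    {V : Type*} [AddCommGroup V] [Module k V] [FiniteDimensional k V]
    [DecidableEq (Submodule k V)]
    (G : Subgroup (V →ₗ[k] V)ˣ) (hGfin : Finite G) (hG : IsReflectionGroup G)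
    {M : Type*} [AddCommGroup M] [Module k M] [FiniteDimensional k M]
    (ρM : Representation k G M) (r : ℕ) (hr : Module.finrank k M = r)
    -- the (finite) set of reflecting hyperplanes and the data attached to each of them
    (HypF : Finset (Submodule k V)) (hHypF : ↑HypF = reflHyperplanes G)
    (α : Submodule k V → Module.Dual k V) (hα : ∀ H ∈ HypF, LinearMap.ker (α H) = H)
    (eF : Submodule k V → ℕ) (sF : Submodule k V → G) (ζF : Submodule k V → k)
    (hfix : ∀ H ∈ HypF, ∀ v ∈ H, ((sF H : (V →ₗ[k] V)ˣ) : V →ₗ[k] V) v = v)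
    (hgen : ∀ H ∈ HypF, ∀ g : G,
      (∀ v ∈ H, ((g : (V →ₗ[k] V)ˣ) : V →ₗ[k] V) v = v) → g ∈ Subgroup.zpowers (sF H))
    (he : ∀ H ∈ HypF, orderOf (sF H) = eF H)
    (hdet : ∀ H ∈ HypF, LinearMap.det ((sF H : (V →ₗ[k] V)ˣ) : V →ₗ[k] V) = ζF H)
    (hζ : ∀ H ∈ HypF, IsPrimitiveRoot (ζF H) (eF H))
    -- a linear character `χ` and the integers `n_H(χ)`, `n_H(χ·det_M)`
    (χ : G →* kˣ) (nχf : Submodule k V → ℕ)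
    (hnχ : ∀ H ∈ HypF, nχf H < eF H ∧ (χ (sF H) : k) = (ζF H ^ nχf H)⁻¹)
    (nχd : Submodule k V → ℕ)
    (hnχd : ∀ H ∈ HypF, nχd H < eF H ∧
      (χ (sF H) : k) * LinearMap.det (ρM (sF H)) = (ζF H ^ nχd H)⁻¹)
    -- the `G`-stable set `ℬ ⊆ 𝓗` of "bad" hyperplanes; `𝒢 = 𝓗 ∖ ℬ`
    (BF : Finset (Submodule k V)) (hBF : BF ⊆ HypF)
    (hBstable : ∀ g ∈ G, ∀ H ∈ BF, Submodule.map (g : V →ₗ[k] V) H ∈ BF)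
    -- hypothesis : every hyperplane of `𝒢` is `M`-good
    (hgood : ∀ H ∈ HypF \ BF, nH ρM (sF H) (ζF H) (eF H) < eF H) :
    -- (i) `Q_{M*} = ∏_{H ∈ ℬ} α_H^{n_H(M*)} ∏_{H ∈ 𝒢_{≠0}} α_H^{e_H(r - n_{0,H}(M)) - n_H(M)}`
    (∏ H ∈ HypF, ofLin (α H) ^ nH ρM.dual (sF H) (ζF H) (eF H) =
      (∏ H ∈ BF, ofLin (α H) ^ nH ρM.dual (sF H) (ζF H) (eF H)) *
      ∏ H ∈ (HypF \ BF).filter (fun H => nH ρM (sF H) (ζF H) (eF H) ≠ 0),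
        ofLin (α H) ^ (eF H * (r - nJ ρM (sF H) (ζF H) 0) - nH ρM (sF H) (ζF H) (eF H))) ∧
    -- (ii) `Q_{χ·det_M} = ∏_{H ∈ ℬ} α_H^{n_H(χ·det_M)} ∏_{H ∈ 𝒢_-} α_H^{n_H(χ)+n_H(M)}`
    --      `∏_{H ∈ 𝒢_+} α_H^{n_H(χ)+n_H(M)-e_H}`
    (∏ H ∈ HypF, ofLin (α H) ^ nχd H =
      (∏ H ∈ BF, ofLin (α H) ^ nχd H) *
      (∏ H ∈ (HypF \ BF).filter
          (fun H => ¬ (eF H - nχf H ≤ nH ρM (sF H) (ζF H) (eF H))),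
        ofLin (α H) ^ (nχf H + nH ρM (sF H) (ζF H) (eF H))) *
      ∏ H ∈ (HypF \ BF).filter
          (fun H => eF H - nχf H ≤ nH ρM (sF H) (ζF H) (eF H)),
        ofLin (α H) ^ (nχf H + nH ρM (sF H) (ζF H) (eF H) - eF H)) :=
  statement9_general G ρM r hr HypF α eF sF ζF he hζ χ nχf hnχ nχd hnχd BF hBF hgood
end
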